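/- arXiv:1410.5543 — 2 statements merged into one kernel-verified Lean document; each statement's English description precedes it below -/
import Mathlib

section
/- Let K be an abstract simplicial complex on [m]. The ℤ-linear map μ : ⊕_{ω⊆[m]} C̃_*(K_ω) → C_*((D^1,S^0)^K) sending a simplex σ ∈ K_ω (viewed as a basis element of C̃_*(K_ω)) to the word u_σ ε_{ω∖σ} is a bijective chain map that raises degrees by one; that is, μ is an isomorphism of chain complexes after shifting degrees up by one. -/
/-!
The map `μ` is induced by the bijection `(ω, σ) ↦ (σ, ω ∖ σ)` between the two basis index sets,
with inverse `(σ, τ) ↦ (σ ∪ τ, σ)`, so it is bijective. Both boundaries remove a vertex `i ∈ σ`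
with the same sign `(-1)^{(i,σ)}`, and `ω ∖ (σ ∖ i) = (ω ∖ σ) ∪ {i}` for `i ∈ σ ⊆ ω`, so `μ`
commutes with them. Degrees go from `card σ - 1` to `card σ`.
-/

structure ASC (m : ℕ) where
  faces : Set (Finset (Fin m))
  empty_mem : ∅ ∈ faces
  down_closed : ∀ {σ τ : Finset (Fin m)}, σ ∈ faces → τ ⊆ σ → τ ∈ faces

def csg {m : ℕ} (i : Fin m) (σ : Finset (Fin m)) : ℤ :=
  (-1) ^ (σ.filter (fun j => j < i)).card

variable {m : ℕ}

/-- Index of the cellular basis words `u_σ ε_τ` (equivalently `u^σ t^τ`). -/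
def DSIdx (K : ASC m) : Type :=
  {p : Finset (Fin m) × Finset (Fin m) // p.1 ∈ K.faces ∧ Disjoint p.1 p.2}

/-- cellular chains of the real moment-angle complex -/
abbrev DSChain (K : ASC m) : Type := DSIdx K →₀ ℤ

/-- the boundary `∂(u_σ ε_τ) = ∑_{i ∈ σ} (-1)^{(i,σ)} u_{σ∖i} ε_{τ∪i}` -/
noncomputable def DSbnd (K : ASC m) : DSChain K →ₗ[ℤ] DSChain K :=
  Finsupp.lift (DSChain K) ℤ (DSIdx K) fun b =>
    ∑ i ∈ b.1.1, csg i b.1.1 •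
      Finsupp.single (⟨(b.1.1.erase i, insert i b.1.2),
        ⟨K.down_closed b.2.1 (Finset.erase_subset _ _), by
          refine Finset.disjoint_left.2 fun a ha hb => ?_
          rcases Finset.mem_insert.1 hb with h | h
          · exact (Finset.mem_erase.1 ha).1 h
          · exact (Finset.disjoint_left.1 b.2.2 (Finset.mem_of_mem_erase ha)) h⟩⟩ : DSIdx K)
        (1 : ℤ)

/-- degree of a cellular basis word -/
def DSdeg {K : ASC m} (b : DSIdx K) : ℤ := b.1.1.card

/-- index of basis of `⊕_ω C̃_*(K_ω)` : pairs `(ω, σ)` with `σ ∈ K_ω`. -/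
def PairIdx (K : ASC m) : Type :=
  {p : Finset (Fin m) × Finset (Fin m) // p.2 ⊆ p.1 ∧ p.2 ∈ K.faces}

abbrev PairChain (K : ASC m) : Type := PairIdx K →₀ ℤ

/-- the boundary of the direct sum of augmented chain complexes of full subcomplexes -/
noncomputable def Pairbnd (K : ASC m) : PairChain K →ₗ[ℤ] PairChain K :=
  Finsupp.lift (PairChain K) ℤ (PairIdx K) fun b =>
    ∑ i ∈ b.1.2, csg i b.1.2 •
      Finsupp.single (⟨(b.1.1, b.1.2.erase i),
        ⟨(Finset.erase_subset _ _).trans b.2.1,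
         K.down_closed b.2.2 (Finset.erase_subset _ _)⟩⟩ : PairIdx K) (1 : ℤ)

/-- degree of `σ ∈ C̃_*(K_ω)` is `card σ - 1`. -/
def Pairdeg {K : ASC m} (b : PairIdx K) : ℤ := (b.1.2.card : ℤ) - 1

/-- the map `μ` sending `σ ∈ C̃_*(K_ω)` to the word `u_σ ε_{ω∖σ}` -/
noncomputable def muMap (K : ASC m) : PairChain K →ₗ[ℤ] DSChain K :=
  Finsupp.lift (DSChain K) ℤ (PairIdx K) fun b =>
    Finsupp.single (⟨(b.1.2, b.1.1 \ b.1.2), ⟨b.2.2, Finset.disjoint_sdiff⟩⟩ : DSIdx K) (1 : ℤ)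

open Classical in
noncomputable def partSub {ι α : Type*} (f : ι → α) (a : α) : Submodule ℤ (ι →₀ ℤ) where
  carrier := {x | ∀ b ∈ x.support, f b = a}
  add_mem' := by
    intro x y hx hy b hb
    rcases Finset.mem_union.1 (Finsupp.support_add hb) with h | h
    · exact hx b h
    · exact hy b h
  zero_mem' := by intro b hb; simp at hb
  smul_mem' := by
    intro c x hx b hb
    exact hx b (Finsupp.support_smul hb)

theorem Finsupp.lift_apply_single_one {X R M : Type*} [Semiring R] [AddCommMonoid M]
    [Module R M] (f : X → M) (x : X) : Finsupp.lift M R X f (Finsupp.single x 1) = f x := by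
  simp

theorem Finsupp.domLCongr_mem_partSub {ι κ α β : Type*} (e : ι ≃ κ) {f : ι → α} {g : κ → β}
    {h : α → β} (hfg : ∀ b, g (e b) = h (f b)) {a : α} {x : ι →₀ ℤ} (hx : x ∈ partSub f a) :
    Finsupp.domLCongr (R := ℤ) e x ∈ partSub g (h a) := by
  intro c hc
  have hc' : e.symm c ∈ x.support := by
    simpa [Finsupp.domLCongr_apply, Finsupp.equivMapDomain_apply] using hc
  rw [← e.apply_symm_apply c, hfg, hx _ hc']

section

variable {K : ASC m}

def PairIdx.erase (b : PairIdx K) (i : Fin m) : PairIdx K :=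
  ⟨(b.1.1, b.1.2.erase i), (Finset.erase_subset _ _).trans b.2.1,
    K.down_closed b.2.2 (Finset.erase_subset _ _)⟩

def DSIdx.erase (b : DSIdx K) (i : Fin m) : DSIdx K :=
  ⟨(b.1.1.erase i, insert i b.1.2), K.down_closed b.2.1 (Finset.erase_subset _ _),
    Finset.disjoint_insert_right.2
      ⟨Finset.notMem_erase i _, b.2.2.mono_left (Finset.erase_subset _ _)⟩⟩

variable (K) in
def PairIdx.equivDSIdx : PairIdx K ≃ DSIdx K where
  toFun b := ⟨(b.1.2, b.1.1 \ b.1.2), b.2.2, Finset.disjoint_sdiff⟩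
  invFun c := ⟨(c.1.1 ∪ c.1.2, c.1.1), Finset.subset_union_left, c.2.1⟩
  left_inv := fun ⟨(_, _), hσω, _⟩ => Subtype.ext <| by simp [Finset.union_sdiff_of_subset hσω]
  right_inv := fun ⟨(_, _), _, hd⟩ => Subtype.ext <| by simp [Finset.union_sdiff_cancel_left hd]

open PairIdx

theorem DSdeg_equivDSIdx (b : PairIdx K) : DSdeg (equivDSIdx K b) = Pairdeg b + 1 :=
  (sub_add_cancel _ _).symm

theorem equivDSIdx_erase (b : PairIdx K) {i : Fin m} (hi : i ∈ b.1.2) :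
    equivDSIdx K (b.erase i) = (equivDSIdx K b).erase i :=
  Subtype.ext <| Prod.ext rfl (Finset.sdiff_erase (b.2.1 hi))

theorem Pairbnd_single (b : PairIdx K) :
    Pairbnd K (Finsupp.single b 1) = ∑ i ∈ b.1.2, csg i b.1.2 • Finsupp.single (b.erase i) 1 :=
  Finsupp.lift_apply_single_one _ b

theorem DSbnd_single (b : DSIdx K) :
    DSbnd K (Finsupp.single b 1) = ∑ i ∈ b.1.1, csg i b.1.1 • Finsupp.single (b.erase i) 1 :=
  Finsupp.lift_apply_single_one _ b

theorem muMap_single (b : PairIdx K) :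
    muMap K (Finsupp.single b 1) = Finsupp.single (equivDSIdx K b) 1 :=
  Finsupp.lift_apply_single_one _ b

variable (K)

theorem muMap_eq_domLCongr : muMap K = (Finsupp.domLCongr (equivDSIdx K)).toLinearMap :=
  Finsupp.lhom_ext' fun b => LinearMap.ext_ring <| by simp [muMap_single]

theorem muMap_comp_Pairbnd : (muMap K).comp (Pairbnd K) = (DSbnd K).comp (muMap K) := by
  refine Finsupp.lhom_ext' fun b => LinearMap.ext_ring ?_
  show muMap K (Pairbnd K (Finsupp.single b 1)) = DSbnd K (muMap K (Finsupp.single b 1))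
  rw [Pairbnd_single, muMap_single, DSbnd_single, map_sum]
  refine Finset.sum_congr rfl fun i hi => ?_
  rw [map_zsmul, muMap_single, equivDSIdx_erase b hi]
  rfl

end

theorem stmt3 (K : ASC m) :
    Function.Bijective (muMap K) ∧
    (∀ x : PairChain K, muMap K (Pairbnd K x) = DSbnd K (muMap K x)) ∧
    (∀ (p : ℤ) (x : PairChain K), x ∈ partSub Pairdeg p → muMap K x ∈ partSub DSdeg (p + 1)) := by
  refine ⟨?_, LinearMap.congr_fun (muMap_comp_Pairbnd K), fun p x hx => ?_⟩
  · rw [muMap_eq_domLCongr]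
    exact (Finsupp.domLCongr (PairIdx.equivDSIdx K)).bijective
  · rw [muMap_eq_domLCongr]
    exact Finsupp.domLCongr_mem_partSub (PairIdx.equivDSIdx K) (h := (· + 1)) DSdeg_equivDSIdx hx
end

section
/- Let K be an abstract simplicial complex on [m] and J = (j_1,…,j_m) an m-tuple of positive integers. Then R*_K(J) is a free ℤ-module with basis the square-free monomials ṽ^σ ũ^τ = x^1 x^2 ⋯ x^m (factors in increasing order of index, with x^i = ṽ^i if i ∈ σ, x^i = ũ^i if i ∈ τ, and x^i omitted otherwise), where σ ranges over simplices of K and τ over subsets of [m] with σ ∩ τ = ∅; that is, every element of R*_K(J) is uniquely a ℤ-linear combination of such monomials. -/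
set_option synthInstance.maxHeartbeats 1000000
set_option maxHeartbeats 1000000

variable {m : ℕ}

/-- the free (noncommutative) `ℤ`-algebra on the generators `ṽ^1,…,ṽ^m,ũ^1,…,ũ^m` -/
abbrev FA (m : ℕ) : Type := FreeAlgebra ℤ (Fin m ⊕ Fin m)

/-- the generator `ṽ^i` (of degree `j_i`) -/
def gV (i : Fin m) : FA m := FreeAlgebra.ι ℤ (Sum.inl i)

/-- the generator `ũ^i` (of degree `j_i - 1`) -/
def gU (i : Fin m) : FA m := FreeAlgebra.ι ℤ (Sum.inr i)

/-- `x^i`, either `ṽ^i` or `ũ^i` -/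
def gen (b : Bool) (i : Fin m) : FA m := if b then gV i else gU i

/-- the degree of `x^i` -/
def gdeg (J : Fin m → ℕ) (b : Bool) (i : Fin m) : ℕ := if b then J i else J i - 1

/-- the defining relations of `R*_K(J)` : graded commutativity for distinct indices,
the square relations, `ũ^iṽ^i = 0`, `ṽ^iũ^i = ṽ^i` if `deg ũ^i = 0` (else `0`),
and the Stanley–Reisner relations `ṽ^τ = 0` for `τ ∉ K`. -/
inductive RrelK (K : ASC m) (J : Fin m → ℕ) : FA m → FA m → Prop
  | comm (b c : Bool) (i j : Fin m) (h : i ≠ j) :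
      RrelK K J (gen b i * gen c j)
        (((-1 : ℤ) ^ (gdeg J b i * gdeg J c j)) • (gen c j * gen b i))
  | sq (b : Bool) (i : Fin m) :
      RrelK K J (gen b i * gen b i) (if gdeg J b i = 0 then gen b i else 0)
  | uv (i : Fin m) : RrelK K J (gU i * gV i) 0
  | vu (i : Fin m) :
      RrelK K J (gV i * gU i) (if J i - 1 = 0 then gV i else 0)
  | sr (τ : Finset (Fin m)) (h : τ ∉ K.faces) :
      RrelK K J (((τ.sort (· ≤ ·)).map gV).prod) 0

/-- `R*_K(J) = R*(J)/I_K(J)`, as the quotient of the free algebra by the relations. -/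
abbrev RKJ (K : ASC m) (J : Fin m → ℕ) : Type := RingQuot (RrelK K J)

/-- index of the square-free monomials `ṽ^σ ũ^τ` with `σ ∈ K`, `σ ∩ τ = ∅`. -/
def MonIdx (K : ASC m) : Type :=
  {p : Finset (Fin m) × Finset (Fin m) // p.1 ∈ K.faces ∧ Disjoint p.1 p.2}

open Classical in
/-- the square-free monomial `ṽ^σ ũ^τ = x^1 x^2 ⋯ x^m` (factors in increasing order
of index) in `R*_K(J)` -/
noncomputable def monom (K : ASC m) (J : Fin m → ℕ) (b : MonIdx K) : RKJ K J :=
  RingQuot.mkAlgHom ℤ (RrelK K J)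
    ((((b.1.1 ∪ b.1.2).sort (· ≤ ·)).map
      (fun i => if i ∈ b.1.1 then gV i else gU i)).prod)

/-!
Spanning: modulo the relations, left multiplication by a generator `x^i` moves it, up to sign,
to its place in a square-free word `x^{i_1} ⋯ x^{i_r}` (`i_1 < ⋯ < i_r`); if the word already
has a factor at `i`, the relations `x^i y^i ∈ ℤ x^i` absorb it; and a word whose `ṽ`-part is
not a face vanishes by the Stanley–Reisner relation. So the `ℤ`-span of the monomials is a left
ideal containing `1`.

Independence: `R*_K(J)` acts on the free `ℤ`-module on the states `f : [m] → {ṽ, ũ, none}`,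
the generator `x^i` sending `e_f` to `± e_{f[i ↦ x]}` (Koszul sign) or to `0`. Applying
`ṽ^σ ũ^τ` to the empty state gives the basis vector of the state of `(σ, τ)`.
-/

namespace RKJ

open Function

def word (col : Fin m → Bool) (s : Finset (Fin m)) : FA m :=
  ((s.sort (· ≤ ·)).map fun i => gen (col i) i).prod

lemma word_empty (col : Fin m → Bool) : word col ∅ = 1 := by
  simp [word]

lemma word_insert_of_lt {col : Fin m → Bool} {a : Fin m} {s : Finset (Fin m)}
    (ha : ∀ x ∈ s, a < x) : word col (insert a s) = gen (col a) a * word col s := by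
  rw [word, Finset.sort_insert _ (fun x hx => (ha x hx).le) fun h => lt_irrefl a (ha a h)]
  rfl

lemma word_congr {col col' : Fin m → Bool} {s : Finset (Fin m)} (h : ∀ j ∈ s, col j = col' j) :
    word col s = word col' s := by
  unfold word
  congr 1
  exact List.map_congr_left fun j hj => by rw [h j ((Finset.mem_sort _).1 hj)]

lemma word_update_of_notMem {col : Fin m → Bool} {s : Finset (Fin m)} {i : Fin m} (c : Bool)
    (hi : i ∉ s) : word (update col i c) s = word col s :=
  word_congr fun _ hj => update_of_ne (ne_of_mem_of_not_mem hj hi) _ _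

variable (K : ASC m) (J : Fin m → ℕ)

section Spanning

noncomputable abbrev mk : FA m →ₐ[ℤ] RKJ K J := RingQuot.mkAlgHom ℤ (RrelK K J)

lemma mk_gen_mul_gen_self (c c' : Bool) (i : Fin m) :
    mk K J (gen c i * gen c' i) ∈ ℤ ∙ mk K J (gen c i) := by
  have key : ∀ {x y : FA m}, RrelK K J x y → (y = 0 ∨ y = gen c i) →
      mk K J x ∈ ℤ ∙ mk K J (gen c i) := by
    rintro x y h (rfl | rfl) <;> rw [RingQuot.mkAlgHom_rel ℤ h]
    · rw [map_zero]
      exact Submodule.zero_mem _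
    · exact Submodule.mem_span_singleton_self _
  cases c <;> cases c'
  · exact key (RrelK.sq false i) (by split_ifs <;> simp)
  · exact key (RrelK.uv i) (Or.inl rfl)
  · exact key (RrelK.vu i) (by split_ifs <;> simp [gen])
  · exact key (RrelK.sq true i) (by split_ifs <;> simp)

lemma mk_gen_mul_gen_of_ne (c d : Bool) {i j : Fin m} (h : i ≠ j) :
    ∃ ε : ℤˣ, mk K J (gen c i * gen d j) = ε • mk K J (gen d j * gen c i) :=
  ⟨(-1) ^ (gdeg J c i * gdeg J d j), by
    rw [RingQuot.mkAlgHom_rel ℤ (RrelK.comm c d i j h), map_smul, Units.smul_def]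
    push_cast; rfl⟩

lemma mk_gen_mul_word_of_notMem (c : Bool) (col : Fin m → Bool) {i : Fin m}
    {s : Finset (Fin m)} (hi : i ∉ s) :
    ∃ ε : ℤˣ, mk K J (gen c i * word col s) = ε • mk K J (word (update col i c) (insert i s)) := by
  induction s using Finset.induction_on_min with
  | empty =>
    refine ⟨1, ?_⟩
    rw [word_insert_of_lt (s := ∅) (by simp), word_empty, word_empty, update_self, one_smul]
  | insert a s ha ih =>
    have hia : i ≠ a := fun h => hi (h ▸ Finset.mem_insert_self a s)
    rcases hia.lt_or_gt with hlt | hgt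
    · refine ⟨1, ?_⟩
      have : ∀ x ∈ insert a s, i < x := by
        simpa [Finset.mem_insert] using ⟨hlt, fun x hx => hlt.trans (ha x hx)⟩
      rw [one_smul, word_insert_of_lt this, update_self, word_update_of_notMem c hi]
    · obtain ⟨ε, hε⟩ := ih (fun h => hi (Finset.mem_insert_of_mem h))
      obtain ⟨δ, hδ⟩ := mk_gen_mul_gen_of_ne K J c (col a) hia
      have ha' : ∀ x ∈ insert i s, a < x := by
        simpa [Finset.mem_insert] using ⟨hgt, ha⟩
      refine ⟨δ * ε, ?_⟩
      rw [Finset.insert_comm, word_insert_of_lt ha', word_insert_of_lt ha, ← mul_assoc, map_mul,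
        hδ, smul_mul_assoc, map_mul, mul_assoc, ← map_mul, hε, mul_smul_comm, smul_smul,
        map_mul, update_of_ne hia.symm]

lemma mk_gen_mul_word_of_mem (c : Bool) (col : Fin m → Bool) {i : Fin m} {s : Finset (Fin m)}
    (hi : i ∈ s) : mk K J (gen c i * word col s) ∈ ℤ ∙ mk K J (word (update col i c) s) := by
  have hi' : i ∉ s.erase i := Finset.notMem_erase i s
  obtain ⟨ε, hε⟩ := mk_gen_mul_word_of_notMem K J (col i) col hi'
  obtain ⟨δ, hδ⟩ := mk_gen_mul_word_of_notMem K J c col hi'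
  rw [update_eq_self, Finset.insert_erase hi] at hε
  rw [Finset.insert_erase hi] at hδ
  obtain ⟨n, hn⟩ := Submodule.mem_span_singleton.1 (mk_gen_mul_gen_self K J c (col i) i)
  refine Submodule.mem_span_singleton.2 ⟨(ε⁻¹ : ℤˣ) * n * δ, ?_⟩
  -- `x^i` is split off the word, absorbed by `x^i x^i ∈ ℤ x^i`, and reinserted
  rw [map_mul, eq_inv_smul_iff.2 hε.symm, mul_smul_comm, ← map_mul, ← mul_assoc, map_mul, ← hn,
    smul_mul_assoc, ← map_mul, hδ]
  simp only [Units.smul_def, smul_smul, mul_assoc]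

lemma mk_gen_mul_word_mem_span_singleton (c : Bool) (col : Fin m → Bool) (i : Fin m)
    (s : Finset (Fin m)) :
    mk K J (gen c i * word col s) ∈ ℤ ∙ mk K J (word (update col i c) (insert i s)) := by
  by_cases hi : i ∈ s
  · rw [Finset.insert_eq_of_mem hi]
    exact mk_gen_mul_word_of_mem K J c col hi
  · obtain ⟨ε, hε⟩ := mk_gen_mul_word_of_notMem K J c col hi
    rw [hε, Units.smul_def]
    exact Submodule.smul_mem _ _ (Submodule.mem_span_singleton_self _)

lemma mk_word_eq_zero {col : Fin m → Bool} {s : Finset (Fin m)}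
    (hs : {j ∈ s | col j = true} ∉ K.faces) : mk K J (word col s) = 0 := by
  set τ := {j ∈ s | col j = true}
  suffices h : ∀ u : Finset (Fin m), (∀ j ∈ u, col j = false) → mk K J (word col (τ ∪ u)) = 0 by
    rw [← h {j ∈ s | ¬col j = true} (by simp), Finset.filter_union_filter_not_eq]
  intro u
  induction u using Finset.induction_on with
  | empty =>
    intro _
    have hτ : word col τ = ((τ.sort (· ≤ ·)).map gV).prod := by
      unfold word
      congr 1
      refine List.map_congr_left fun j hj => ?_
      rw [(Finset.mem_filter.1 ((Finset.mem_sort _).1 hj)).2]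
      rfl
    rw [Finset.union_empty, hτ, RingQuot.mkAlgHom_rel ℤ (RrelK.sr τ hs), map_zero]
  | insert a u ha ih =>
    intro hu
    have hcol : col a = false := hu a (Finset.mem_insert_self a u)
    have ha' : a ∉ τ ∪ u := by
      simp [τ, Finset.mem_union, ha, hcol]
    obtain ⟨ε, hε⟩ := mk_gen_mul_word_of_notMem K J (col a) col ha'
    rw [update_eq_self, map_mul, ih fun j hj => hu j (Finset.mem_insert_of_mem hj), mul_zero,
      eq_comm] at hε
    rw [Finset.union_insert]
    exact (smul_eq_zero_iff_eq ε).1 hε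

lemma monom_eq_mk_word (b : MonIdx K) :
    monom K J b = mk K J (word (fun j => decide (j ∈ b.1.1)) (b.1.1 ∪ b.1.2)) := by
  unfold monom word
  congr 2
  refine List.map_congr_left fun j _ => ?_
  by_cases h : j ∈ b.1.1 <;> simp [h, gen]

lemma mk_word_mem_span (col : Fin m → Bool) (s : Finset (Fin m)) :
    mk K J (word col s) ∈ Submodule.span ℤ (Set.range (monom K J)) := by
  by_cases hs : {j ∈ s | col j = true} ∈ K.faces
  · let b : MonIdx K := ⟨({j ∈ s | col j = true}, {j ∈ s | ¬col j = true}), hs,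
      Finset.disjoint_filter_filter_not s s _⟩
    have hb : mk K J (word col s) = monom K J b := by
      rw [monom_eq_mk_word, Finset.filter_union_filter_not_eq]
      exact congrArg _ (word_congr fun j hj => by simp [b, hj])
    rw [hb]
    exact Submodule.subset_span ⟨b, rfl⟩
  · rw [mk_word_eq_zero K J hs]
    exact Submodule.zero_mem _

lemma mk_mul_mem_span (y : FA m) {r : RKJ K J}
    (hr : r ∈ Submodule.span ℤ (Set.range (monom K J))) :
    mk K J y * r ∈ Submodule.span ℤ (Set.range (monom K J)) := by
  induction y using FreeAlgebra.induction generalizing r with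
  | grade0 n =>
    rw [AlgHom.commutes, ← Algebra.smul_def]
    exact Submodule.smul_mem _ n hr
  | grade1 x =>
    obtain ⟨c, i, hx⟩ : ∃ c i, FreeAlgebra.ι ℤ x = gen c i := by
      rcases x with i | i
      exacts [⟨true, i, rfl⟩, ⟨false, i, rfl⟩]
    induction hr using Submodule.span_induction with
    | mem _ hb =>
      obtain ⟨b, rfl⟩ := hb
      rw [hx, monom_eq_mk_word, ← map_mul]
      exact (Submodule.span_singleton_le_iff_mem _ _).2 (mk_word_mem_span K J _ _)
        (mk_gen_mul_word_mem_span_singleton K J c _ i _)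
    | zero => simp
    | add _ _ _ _ h₁ h₂ => simpa [mul_add] using add_mem h₁ h₂
    | smul n _ _ h =>
      rw [mul_smul_comm]
      exact Submodule.smul_mem _ n h
  | mul y₁ y₂ h₁ h₂ =>
    rw [map_mul, mul_assoc]
    exact h₁ (h₂ hr)
  | add y₁ y₂ h₁ h₂ =>
    rw [map_add, add_mul]
    exact add_mem (h₁ hr) (h₂ hr)

theorem span_range_monom : Submodule.span ℤ (Set.range (monom K J)) = ⊤ := by
  refine eq_top_iff.2 fun r _ => ?_
  obtain ⟨y, rfl⟩ := RingQuot.mkAlgHom_surjective ℤ (RrelK K J) r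
  have h1 := mk_word_mem_span K J (fun _ => true) ∅
  rw [word_empty, map_one] at h1
  simpa using mk_mul_mem_span K J y h1

end Spanning

section Model

/-- `f j = some true`, `some false`, `none`: a factor `ṽ^j`, a factor `ũ^j`, no factor at `j`. -/
abbrev State (m : ℕ) := Fin m → Option Bool

def vSet (f : State m) : Finset (Fin m) := {j | f j = some true}

lemma mem_vSet {f : State m} {j : Fin m} : j ∈ vSet f ↔ f j = some true := by
  simp [vSet]

lemma vSet_subset_vSet_update {f : State m} {i : Fin m} (hi : f i ≠ some true) (x : Bool) :
    vSet f ⊆ vSet (update f i (some x)) := by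
  intro j hj
  rw [mem_vSet] at hj ⊢
  rwa [update_of_ne (by rintro rfl; exact hi hj)]

lemma vSet_update_true (f : State m) (i : Fin m) :
    vSet (update f i (some true)) = insert i (vSet f) := by
  ext j
  by_cases h : j = i
  · subst h
    simp [mem_vSet]
  · simp [mem_vSet, h]

def degAt (f : State m) (j : Fin m) : ℕ := (f j).elim 0 fun b => gdeg J b j

def degBelow (f : State m) (i : Fin m) : ℕ := ∑ j ∈ Finset.Iio i, degAt J f j

/-- The Koszul sign of moving `x^i` past the factors of `f` at positions `< i`. -/
def sign (x : Bool) (i : Fin m) (f : State m) : ℤ := (-1) ^ (gdeg J x i * degBelow J f i)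

/-- `x^i` kills a factor `ṽ^i`, and a factor `ũ^i` unless `deg ũ^i = 0`, in which case it absorbs
it. -/
def LocallyAdmissible (i : Fin m) (f : State m) : Prop :=
  f i ≠ some true ∧ (f i = some false → J i = 1)

def Admissible (x : Bool) (i : Fin m) (f : State m) : Prop :=
  LocallyAdmissible J i f ∧ vSet (update f i (some x)) ∈ K.faces

lemma degAt_eq_zero {i : Fin m} {f : State m} (h : LocallyAdmissible J i f) :
    degAt J f i = 0 := by
  obtain ⟨h₁, h₂⟩ := h
  unfold degAt
  rcases hf : f i with _ | _ | _
  · rfl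
  · simp [gdeg, h₂ hf]
  · exact absurd hf h₁

lemma degBelow_update {f : State m} {j : Fin m} (hj : degAt J f j = 0) (y : Bool) (i : Fin m) :
    degBelow J (update f j (some y)) i = degBelow J f i + if j < i then gdeg J y j else 0 := by
  have : ∀ k, degAt J (update f j (some y)) k = degAt J f k + if k = j then gdeg J y j else 0 := by
    intro k
    by_cases hk : k = j
    · subst hk
      unfold degAt at hj ⊢
      simp [hj]
    · simp [degAt, hk]
  simp only [degBelow, this, Finset.sum_add_distrib, Finset.sum_ite_eq', Finset.mem_Iio]

lemma sign_mul_sign_update {f : State m} {i j : Fin m} (hij : i ≠ j) (x y : Bool)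
    (hi : degAt J f i = 0) (hj : degAt J f j = 0) :
    sign J y j f * sign J x i (update f j (some y))
      = (-1) ^ (gdeg J x i * gdeg J y j) * (sign J x i f * sign J y j (update f i (some x))) := by
  unfold sign
  rw [degBelow_update J hj, degBelow_update J hi]
  rcases hij.lt_or_gt with h | h
  · have hsq : ((-1 : ℤ) ^ (gdeg J x i * gdeg J y j)) ^ 2 = 1 := by
      rw [← pow_mul, pow_mul', neg_one_sq, one_pow]
    simp only [h, h.not_gt, if_true, if_false, add_zero, mul_add, pow_add]
    linear_combination (-(-1 : ℤ) ^ (gdeg J y j * degBelow J f j) *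
      (-1) ^ (gdeg J x i * degBelow J f i)) * hsq
  · simp only [h, h.not_gt, if_true, if_false, add_zero, mul_add, pow_add]
    ring

open Classical in
noncomputable def act (x : Bool) (i : Fin m) : Module.End ℤ (State m →₀ ℤ) :=
  Finsupp.linearCombination ℤ fun f =>
    if Admissible K J x i f then sign J x i f • Finsupp.single (update f i (some x)) 1 else 0

open Classical in
lemma act_single (x : Bool) (i : Fin m) (f : State m) :
    act K J x i (Finsupp.single f 1) =
      if Admissible K J x i f then sign J x i f • Finsupp.single (update f i (some x)) 1
      else 0 := by
  rw [act, Finsupp.linearCombination_single, one_smul]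

open Classical in
lemma act_mul_act_single (x y : Bool) (i j : Fin m) (f : State m) :
    (act K J x i * act K J y j) (Finsupp.single f 1) =
      if Admissible K J y j f ∧ Admissible K J x i (update f j (some y)) then
        (sign J y j f * sign J x i (update f j (some y))) •
          Finsupp.single (update (update f j (some y)) i (some x)) 1
      else 0 := by
  rw [Module.End.mul_apply, act_single]
  by_cases hy : Admissible K J y j f
  · rw [if_pos hy, map_smul, act_single]
    by_cases hx : Admissible K J x i (update f j (some y))
    · rw [if_pos hx, if_pos ⟨hy, hx⟩, smul_smul]
    · rw [if_neg hx, if_neg fun h => hx h.2, smul_zero]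
  · rw [if_neg hy, if_neg fun h => hy h.1, map_zero]

lemma admissible_and_admissible_update_iff {x y : Bool} {i j : Fin m} (hij : i ≠ j)
    (f : State m) :
    Admissible K J y j f ∧ Admissible K J x i (update f j (some y)) ↔
      LocallyAdmissible J j f ∧ LocallyAdmissible J i f ∧
        vSet (update (update f j (some y)) i (some x)) ∈ K.faces := by
  have hloc : LocallyAdmissible J i (update f j (some y)) ↔ LocallyAdmissible J i f := by
    simp only [LocallyAdmissible, update_of_ne hij]
  simp only [Admissible, hloc]
  refine ⟨fun ⟨⟨hj, _⟩, hi, hK⟩ => ⟨hj, hi, hK⟩, fun ⟨hj, hi, hK⟩ => ⟨⟨hj, ?_⟩, hi, hK⟩⟩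
  -- the intermediate `ṽ`-set lies inside the final one
  refine K.down_closed hK (vSet_subset_vSet_update ?_ x)
  rw [update_of_ne hij]
  exact hi.1

lemma act_mul_act_of_ne (x y : Bool) {i j : Fin m} (hij : i ≠ j) :
    act K J x i * act K J y j = (-1) ^ (gdeg J x i * gdeg J y j) • (act K J y j * act K J x i) := by
  refine Finsupp.basisSingleOne.ext fun f => ?_
  rw [Finsupp.coe_basisSingleOne, LinearMap.smul_apply, act_mul_act_single, act_mul_act_single,
    update_comm hij.symm]
  have hswap : Admissible K J y j f ∧ Admissible K J x i (update f j (some y)) ↔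
      Admissible K J x i f ∧ Admissible K J y j (update f i (some x)) := by
    rw [admissible_and_admissible_update_iff K J hij, admissible_and_admissible_update_iff K J
      hij.symm, update_comm hij]
    tauto
  by_cases h : Admissible K J y j f ∧ Admissible K J x i (update f j (some y))
  · have hloc := (admissible_and_admissible_update_iff K J hij f).1 h
    rw [if_pos h, if_pos (hswap.1 h), smul_smul, sign_mul_sign_update J hij x y
      (degAt_eq_zero J hloc.2.1) (degAt_eq_zero J hloc.1)]
  · rw [if_neg h, if_neg (hswap.not.1 h), smul_zero]

lemma admissible_and_admissible_update_self_iff (x y : Bool) (i : Fin m) (f : State m) :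
    Admissible K J y i f ∧ Admissible K J x i (update f i (some y)) ↔
      y = false ∧ J i = 1 ∧ Admissible K J x i f := by
  have hself : LocallyAdmissible J i (update f i (some y)) ↔ y = false ∧ J i = 1 := by
    cases y <;> simp [LocallyAdmissible]
  unfold Admissible
  rw [hself, update_idem]
  constructor
  · rintro ⟨⟨hloc, -⟩, ⟨rfl, hJ⟩, hK⟩
    exact ⟨rfl, hJ, hloc, hK⟩
  · rintro ⟨rfl, hJ, hloc, hK⟩
    refine ⟨⟨hloc, K.down_closed hK ?_⟩, ⟨rfl, hJ⟩, hK⟩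
    simpa only [update_idem] using
      vSet_subset_vSet_update (f := update f i (some false)) (i := i) (by simp) x

lemma act_mul_act_self (x y : Bool) (i : Fin m) :
    act K J x i * act K J y i = if y = false ∧ J i = 1 then act K J x i else 0 := by
  refine Finsupp.basisSingleOne.ext fun f => ?_
  have key := admissible_and_admissible_update_self_iff K J x y i f
  rw [Finsupp.coe_basisSingleOne, act_mul_act_single, update_idem]
  by_cases hy : y = false ∧ J i = 1
  · obtain ⟨rfl, hJ⟩ := hy
    rw [if_pos (⟨rfl, hJ⟩ : false = false ∧ J i = 1), act_single]
    by_cases hx : Admissible K J x i f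
    · rw [if_pos (key.2 ⟨rfl, hJ, hx⟩), if_pos hx]
      simp [sign, degBelow_update J (degAt_eq_zero J hx.1), gdeg, hJ]
    · rw [if_neg fun h => hx (key.1 h).2.2, if_neg hx]
  · rw [if_neg fun h => hy ⟨(key.1 h).1, (key.1 h).2.1⟩, if_neg hy, LinearMap.zero_apply]

lemma prod_act_true_single (l : List (Fin m)) (f : State m) :
    (l.map (act K J true)).prod (Finsupp.single f 1) = 0 ∨
      ∃ (c : ℤ) (g : State m), l.toFinset ⊆ vSet g ∧
        (l.map (act K J true)).prod (Finsupp.single f 1) = c • Finsupp.single g 1 := by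
  induction l with
  | nil => exact Or.inr ⟨1, f, by simp, by simp⟩
  | cons a l ih =>
    rw [List.map_cons, List.prod_cons, Module.End.mul_apply]
    rcases ih with h | ⟨c, g, hg, h⟩
    · exact Or.inl (by rw [h, map_zero])
    · rw [h, map_smul, act_single]
      split_ifs
      · refine Or.inr ⟨c * sign J true a g, update g a (some true), ?_, smul_smul _ _ _⟩
        rw [vSet_update_true, List.toFinset_cons]
        exact Finset.insert_subset_insert a hg
      · exact Or.inl (smul_zero c)

lemma prod_act_true_sort_eq_zero {τ : Finset (Fin m)} (hτ : τ ∉ K.faces) :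
    ((τ.sort (· ≤ ·)).map (act K J true)).prod = 0 := by
  have hτl : (τ.sort (· ≤ ·)).toFinset = τ := Finset.sort_toFinset _ _
  obtain ⟨a, l, hl⟩ : ∃ a l, τ.sort (· ≤ ·) = a :: l := by
    rcases h : τ.sort (· ≤ ·) with _ | ⟨a, l⟩
    · rw [h, List.toFinset_nil] at hτl
      exact absurd (hτl ▸ K.empty_mem) hτ
    · exact ⟨a, l, rfl⟩
  rw [hl, List.toFinset_cons] at hτl
  refine Finsupp.basisSingleOne.ext fun f => ?_
  rw [hl, List.map_cons, List.prod_cons, Finsupp.coe_basisSingleOne, Module.End.mul_apply,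
    LinearMap.zero_apply]
  rcases prod_act_true_single K J l f with h | ⟨c, g, hg, h⟩
  · rw [h, map_zero]
  · rw [h, map_smul, act_single, if_neg, smul_zero]
    intro ha
    refine hτ (K.down_closed ha.2 ?_)
    rw [← hτl, vSet_update_true]
    exact Finset.insert_subset_insert a hg

noncomputable def rep : FA m →ₐ[ℤ] Module.End ℤ (State m →₀ ℤ) :=
  FreeAlgebra.lift ℤ (Sum.elim (act K J true) (act K J false))

lemma rep_gen (x : Bool) (i : Fin m) : rep K J (gen x i) = act K J x i := by
  cases x <;> simp [rep, gen, gV, gU]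

lemma rep_gV (i : Fin m) : rep K J (gV i) = act K J true i := rep_gen K J true i

lemma rep_gU (i : Fin m) : rep K J (gU i) = act K J false i := rep_gen K J false i

lemma rep_rel (hJ : ∀ i, 1 ≤ J i) ⦃a b : FA m⦄ (h : RrelK K J a b) : rep K J a = rep K J b := by
  have hJ1 : ∀ i, J i - 1 = 0 ↔ J i = 1 := fun i => by have := hJ i; omega
  cases h with
  | comm x y i j hij =>
    rw [map_mul, map_smul, map_mul, rep_gen, rep_gen, act_mul_act_of_ne K J x y hij]
  | sq x i =>
    rw [map_mul, rep_gen, act_mul_act_self]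
    cases x
    · simp [gdeg, hJ1, apply_ite (rep K J), rep_gen]
    · simp [gdeg, Nat.one_le_iff_ne_zero.1 (hJ i)]
  | uv i => simp [rep_gU, rep_gV, act_mul_act_self]
  | vu i => simp [rep_gU, rep_gV, act_mul_act_self, hJ1, apply_ite (rep K J)]
  | sr τ hτ =>
    have hV : ⇑(rep K J) ∘ gV = act K J true := funext (rep_gV K J)
    rw [map_list_prod, List.map_map, hV, map_zero]
    exact prod_act_true_sort_eq_zero K J hτ

noncomputable def repQ (hJ : ∀ i, 1 ≤ J i) : RKJ K J →ₐ[ℤ] Module.End ℤ (State m →₀ ℤ) :=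
  RingQuot.liftAlgHom ℤ ⟨rep K J, rep_rel K J hJ⟩

end Model

section Independence

def stateOf (col : Fin m → Bool) (s : Finset (Fin m)) : State m :=
  fun j => if j ∈ s then some (col j) else none

lemma vSet_stateOf (col : Fin m → Bool) (s : Finset (Fin m)) :
    vSet (stateOf col s) = {j ∈ s | col j = true} := by
  ext j
  by_cases h : j ∈ s <;> simp [mem_vSet, stateOf, h]

lemma rep_word_single {col : Fin m → Bool} {s : Finset (Fin m)}
    (hs : {j ∈ s | col j = true} ∈ K.faces) :
    rep K J (word col s) (Finsupp.single (fun _ => none) 1) = Finsupp.single (stateOf col s) 1 := by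
  induction s using Finset.induction_on_min with
  | empty =>
    rw [word_empty, map_one, Module.End.one_apply]
    congr
  | insert a s ha ih =>
    have has : a ∉ s := fun h => lt_irrefl a (ha a h)
    have hupd : update (stateOf col s) a (some (col a)) = stateOf col (insert a s) := by
      funext j
      by_cases hj : j = a
      · subst hj
        simp [stateOf]
      · simp [stateOf, hj]
    have hadm : Admissible K J (col a) a (stateOf col s) := by
      refine ⟨by simp [LocallyAdmissible, stateOf, has], ?_⟩
      rwa [hupd, vSet_stateOf]
    have hsign : sign J (col a) a (stateOf col s) = 1 := by
      rw [sign, degBelow, Finset.sum_eq_zero fun j hj => ?_, mul_zero, pow_zero]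
      have : j ∉ s := fun h => (ha j h).not_gt (Finset.mem_Iio.1 hj)
      simp [degAt, stateOf, this]
    rw [word_insert_of_lt ha, map_mul, Module.End.mul_apply,
      ih (K.down_closed hs (Finset.filter_subset_filter _ (Finset.subset_insert a s))), rep_gen,
      act_single, if_pos hadm, hsign, one_smul, hupd]

lemma stateOf_injective_on_monIdx :
    Injective fun b : MonIdx K => stateOf (fun j => decide (j ∈ b.1.1)) (b.1.1 ∪ b.1.2) := by
  have hmem : ∀ (b : MonIdx K) (c : Bool) (j : Fin m),
      stateOf (fun j => decide (j ∈ b.1.1)) (b.1.1 ∪ b.1.2) j = some c ↔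
        j ∈ (if c then b.1.1 else b.1.2) := by
    intro b c j
    have := @Finset.disjoint_left.1 b.2.2 j
    by_cases h₁ : j ∈ b.1.1 <;> by_cases h₂ : j ∈ b.1.2 <;> cases c <;> simp_all [stateOf]
  intro b b' h
  simp only at h
  refine Subtype.ext (Prod.ext (Finset.ext fun j => ?_) (Finset.ext fun j => ?_))
  · simpa using (hmem b true j).symm.trans (h ▸ hmem b' true j)
  · simpa using (hmem b false j).symm.trans (h ▸ hmem b' false j)

theorem linearIndependent_monom (hJ : ∀ i, 1 ≤ J i) : LinearIndependent ℤ (monom K J) := by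
  let ev : RKJ K J →ₗ[ℤ] State m →₀ ℤ :=
    LinearMap.applyₗ (Finsupp.single (fun _ => none) 1) ∘ₗ (repQ K J hJ).toLinearMap
  have hev : ev ∘ monom K J = (fun f => Finsupp.single f 1) ∘
      fun b : MonIdx K => stateOf (fun j => decide (j ∈ b.1.1)) (b.1.1 ∪ b.1.2) := by
    funext b
    have hface : {j ∈ b.1.1 ∪ b.1.2 | decide (j ∈ b.1.1) = true} = b.1.1 := by
      ext j
      simp only [Finset.mem_filter, Finset.mem_union, decide_eq_true_eq]
      tauto
    rw [comp_apply, monom_eq_mk_word]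
    show repQ K J hJ (mk K J _) _ = _
    rw [repQ, RingQuot.liftAlgHom_mkAlgHom_apply]
    exact rep_word_single K J (by rw [hface]; exact b.2.1)
  exact LinearIndependent.of_comp ev (hev ▸ (Finsupp.linearIndependent_single_one ℤ _).comp _
    (stateOf_injective_on_monIdx K))

end Independence

end RKJ

/-- `R*_K(J)` is a free `ℤ`-module with basis the square-free
monomials `ṽ^σ ũ^τ`, `σ ∈ K`, `τ ⊆ [m]`, `σ ∩ τ = ∅`. -/
theorem stmt13 (K : ASC m) (J : Fin m → ℕ) (hJ : ∀ i, 1 ≤ J i) :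
    LinearIndependent ℤ (monom K J) ∧
    Submodule.span ℤ (Set.range (monom K J)) = ⊤ :=
  ⟨RKJ.linearIndependent_monom K J hJ, RKJ.span_range_monom K J⟩
end
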